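/- arXiv:2305.06675 — 5 statements merged into one kernel-verified Lean document; each statement's English description precedes it below -/
import Mathlib

section
/- For any two compact Hausdorff spaces X and Y, the covering dimension of the topological join satisfies dim(X ∗ Y) ≤ 1 + dim(X) + dim(Y). -/
/-!
Ostrand's theorem: if `dim Z ≤ m` and `Z` is compact Hausdorff, every open cover of `Z` has,
for each `k`, a refinement split into `k` colours, the pieces of one colour pairwise disjoint,
such that every point misses at most `m` colours (colour `c` consists of the level sets of a
partition of unity subordinate to a cover of order `m + 1`, cut at the `c`-th of `k` disjoint
value bands below `1 / (m + 1)`). Conversely, a cover with such a `k`-colour refinement in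
which every point meets some colour has a shrinking of order at most `k`: merge the pieces by
the cover member containing them.

Colour suitable covers of `X` and `Y` with `k = m + n + 2` colours and cut `I` for colour `c`
into the intervals of length `ℓ` with endpoints in `(ℤ + c / k) ℓ`, so that every `t` is an
endpoint for at most one colour. The products interval × `X`-piece × `Y`-piece colour the
cover pulled back to `I × X × Y`, and a point misses at most `m + n + 1` colours. Dropping the
`X`-factor on the intervals that reach `t = 0` and the `Y`-factor on those that reach `t = 1`
makes the pieces saturated, so they descend to the join; this is possible because a fibre
`{0} × X × {y}` is a single point of the join, which gives tubes `[0, δ) × X × B` inside one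
member of the cover.
-/

open unitInterval

/-- `CovDimLE X n` : the Lebesgue covering dimension of `X` is at most `n`, i.e. every open
cover admits an open shrinking (refinement) of order at most `n + 1`. -/
def CovDimLE (X : Type*) [TopologicalSpace X] (n : ℕ) : Prop :=
  ∀ (ι : Type) (U : ι → Set X), (∀ i, IsOpen (U i)) → (⋃ i, U i) = Set.univ →
    ∃ V : ι → Set X, (∀ i, IsOpen (V i)) ∧ (∀ i, V i ⊆ U i) ∧ (⋃ i, V i) = Set.univ ∧
      ∀ x : X, {i | x ∈ V i}.Finite ∧ {i | x ∈ V i}.ncard ≤ n + 1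

/-- The relation generating the join identifications: `(0,x,y) ∼ (0,x',y)` and
`(1,x,y) ∼ (1,x,y')`. -/
def JoinRel (X Y : Type*) : (I × X × Y) → (I × X × Y) → Prop := fun p q =>
  (p.1 = 0 ∧ q.1 = 0 ∧ p.2.2 = q.2.2) ∨ (p.1 = 1 ∧ q.1 = 1 ∧ p.2.1 = q.2.1)

/-- The topological join `X ∗ Y`, the quotient of `[0,1] × X × Y` by the above relation. -/
def Join (X Y : Type*) [TopologicalSpace X] [TopologicalSpace Y] : Type _ :=
  Quot (JoinRel X Y)

instance (X Y : Type*) [TopologicalSpace X] [TopologicalSpace Y] :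
    TopologicalSpace (Join X Y) :=
  inferInstanceAs (TopologicalSpace (Quot (JoinRel X Y)))

open Set Filter Topology

namespace Join

variable {X Y : Type*} [TopologicalSpace X] [TopologicalSpace Y]

def mk (p : I × X × Y) : Join X Y := Quot.mk _ p

theorem isQuotientMap_mk : IsQuotientMap (mk : I × X × Y → Join X Y) := isQuotientMap_quot_mk

theorem mk_eq_mk {p q : I × X × Y} (h : JoinRel X Y p q) : mk p = mk q := Quot.sound h

end Join

section ColoredRefinement

variable {Z ι κ : Type*} [TopologicalSpace Z] {k d : ℕ}

structure IsColoredRefinement (U : ι → Set Z) (d : ℕ) (W : Fin k → κ → Set Z) : Prop where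
  isOpen : ∀ c a, IsOpen (W c a)
  exists_subset : ∀ c a, (W c a).Nonempty → ∃ i, W c a ⊆ U i
  eq_of_mem_of_mem : ∀ c a b z, z ∈ W c a → z ∈ W c b → W c a = W c b
  ncard_missing_le : ∀ z, {c | ∀ a, z ∉ W c a}.ncard ≤ d

namespace IsColoredRefinement

variable {U : ι → Set Z} {W : Fin k → κ → Set Z}

theorem exists_mem (hW : IsColoredRefinement U d W) (hd : d < k) (z : Z) : ∃ c a, z ∈ W c a := by
  by_contra! h
  have hall : {c | ∀ a, z ∉ W c a} = univ := eq_univ_of_forall h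
  have := hW.ncard_missing_le z
  rw [hall, ncard_univ, Nat.card_fin] at this
  omega

theorem exists_shrinking (hW : IsColoredRefinement U d W) (hd : d < k) :
    ∃ V : ι → Set Z, (∀ i, IsOpen (V i)) ∧ (∀ i, V i ⊆ U i) ∧ (⋃ i, V i) = univ ∧
      ∀ z, {i | z ∈ V i}.Finite ∧ {i | z ∈ V i}.ncard ≤ k := by
  rcases isEmpty_or_nonempty Z with hZ | ⟨⟨z₀⟩⟩
  · exact ⟨fun _ => ∅, fun _ => isOpen_empty, fun _ => empty_subset _, Subsingleton.elim _ _,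
      isEmptyElim⟩
  have : Nonempty ι := by
    obtain ⟨c, a, hz₀⟩ := hW.exists_mem hd z₀
    exact (hW.exists_subset c a ⟨z₀, hz₀⟩).nonempty
  let label (s : Set Z) : ι := Classical.epsilon fun i => s ⊆ U i
  have subset_label : ∀ c a, W c a ⊆ U (label (W c a)) := fun c a z hz =>
    Classical.epsilon_spec (hW.exists_subset c a ⟨z, hz⟩) hz
  let V (i : ι) : Set Z := ⋃ (c) (a) (_ : label (W c a) = i), W c a
  have mem_V : ∀ z i, z ∈ V i ↔ ∃ c a, label (W c a) = i ∧ z ∈ W c a := by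
    simp [V]
  refine ⟨V, fun i => ?_, fun i z hz => ?_, ?_, fun z => ?_⟩
  · exact isOpen_iUnion fun c => isOpen_iUnion fun a => isOpen_iUnion fun _ => hW.isOpen c a
  · obtain ⟨c, a, rfl, hca⟩ := (mem_V z i).1 hz
    exact subset_label c a hca
  · refine eq_univ_of_forall fun z => ?_
    obtain ⟨c, a, hz⟩ := hW.exists_mem hd z
    exact mem_iUnion.2 ⟨_, (mem_V z _).2 ⟨c, a, rfl, hz⟩⟩
  -- two labels at `z` coming from the same colour come from the same piece
  choose color a hlabel hmem using fun i : {i | z ∈ V i} => (mem_V z i).1 i.2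
  have color_injective : Function.Injective color := fun i j hij => by
    have hj : z ∈ W (color i) (a j) := hij ▸ hmem j
    apply Subtype.ext
    rw [← hlabel i, ← hlabel j, hW.eq_of_mem_of_mem _ _ _ z (hmem i) hj, hij]
  have : Finite {i | z ∈ V i} := Finite.of_injective color color_injective
  refine ⟨toFinite _, ?_⟩
  rw [← Nat.card_coe_set_eq]
  simpa using Nat.card_le_card_of_injective color color_injective

theorem mono {ι' : Type*} {U' : ι' → Set Z}
    (hW : IsColoredRefinement U' d W) (hU : ∀ j, ∃ i, U' j ⊆ U i) : IsColoredRefinement U d W :=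
  { hW with
    exists_subset := fun c a ha => by
      obtain ⟨j, hj⟩ := hW.exists_subset c a ha
      obtain ⟨i, hi⟩ := hU j
      exact ⟨i, hj.trans hi⟩ }

theorem image_of_isQuotientMap {A : Type*} [TopologicalSpace A] {q : A → Z}
    (hq : IsQuotientMap q) {U : ι → Set Z} {W : Fin k → κ → Set A}
    (hW : IsColoredRefinement (fun i => q ⁻¹' U i) d W)
    (hsat : ∀ c a, q ⁻¹' (q '' W c a) = W c a) :
    IsColoredRefinement U d fun c a => q '' W c a where
  isOpen c a := hq.isOpen_preimage.1 <| (hsat c a).symm ▸ hW.isOpen c a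
  exists_subset c a := by
    rintro ⟨_, p, hp, rfl⟩
    obtain ⟨i, hi⟩ := hW.exists_subset c a ⟨p, hp⟩
    exact ⟨i, image_subset_iff.2 hi⟩
  eq_of_mem_of_mem c a b z := by
    obtain ⟨p, rfl⟩ := hq.surjective z
    intro ha hb
    rw [← mem_preimage, hsat] at ha hb
    rw [hW.eq_of_mem_of_mem c a b p ha hb]
  ncard_missing_le z := by
    obtain ⟨p, rfl⟩ := hq.surjective z
    simpa only [← mem_preimage, hsat] using hW.ncard_missing_le p

end IsColoredRefinement

end ColoredRefinement

theorem Quot.preimage_image_mk {α : Type*} {r : α → α → Prop} {s : Set α}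
    (h : ∀ a b, r a b → (a ∈ s ↔ b ∈ s)) : Quot.mk r ⁻¹' (Quot.mk r '' s) = s := by
  refine Subset.antisymm ?_ (subset_preimage_image _ _)
  rintro a ⟨b, hb, hba⟩
  have := congrArg (Quot.lift (· ∈ s) fun a b hab => propext (h a b hab)) hba
  simp_all

namespace PartitionOfUnity

variable {ι X : Type*} [TopologicalSpace X] {s : Set X} (f : PartitionOfUnity ι X s)
  {a b : ℝ} {S : Set ι}

def levelSet (a b : ℝ) (S : Set ι) : Set X :=
  {x | (∀ i ∈ S, a < f i x) ∧ ∀ i ∉ S, f i x < b}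

theorem levelSet_subset_support (ha : 0 ≤ a) {i : ι} (hi : i ∈ S) :
    f.levelSet a b S ⊆ Function.support (f i) :=
  fun _ hx => (ha.trans_lt (hx.1 i hi)).ne'

theorem isOpen_levelSet (ha : 0 ≤ a) (hb : 0 < b) : IsOpen (f.levelSet a b S) := by
  have hlarge : IsOpen {x | ∀ i ∉ S, f i x < b} := by
    have hclosed : IsClosed (⋃ i : ↥Sᶜ, {x | b ≤ f i x}) :=
      (f.locallyFinite.comp_injective Subtype.val_injective).subset
        (fun i x hx => (hb.trans_le hx).ne') |>.isClosed_iUnion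
        fun i => isClosed_le continuous_const (f i).continuous
    convert hclosed.isOpen_compl using 1
    ext x
    simp
  by_cases hS : S.Finite
  · have : f.levelSet a b S = (⋂ i ∈ S, {x | a < f i x}) ∩ {x | ∀ i ∉ S, f i x < b} := by
      ext x
      simp [levelSet]
    rw [this]
    exact (hS.isOpen_biInter fun i _ => isOpen_lt continuous_const (f i).continuous).inter hlarge
  -- an infinite `S` gives an empty level set, since the partition is point finite
  convert isOpen_empty
  refine eq_empty_of_forall_notMem fun x hx => hS ?_
  exact (f.locallyFinite.point_finite x).subset fun i hi => f.levelSet_subset_support ha hi hx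

theorem eq_of_mem_levelSet (hba : b ≤ a) {S' : Set ι} {x : X} (hS : x ∈ f.levelSet a b S)
    (hS' : x ∈ f.levelSet a b S') : S = S' := by
  ext i
  constructor <;> intro hi <;> by_contra hi'
  · linarith [hS.1 i hi, hS'.2 i hi']
  · linarith [hS'.1 i hi, hS.2 i hi']

theorem exists_mem_Icc_of_forall_notMem_levelSet {x : X} (h : ∀ S, x ∉ f.levelSet a b S) :
    ∃ i, f i x ∈ Icc b a := by
  by_contra! hIcc
  refine h {i | a < f i x} ⟨fun i hi => hi, fun i hi => ?_⟩
  by_contra! hb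
  exact hIcc i ⟨hb, not_lt.1 hi⟩

theorem exists_inv_le_apply {m : ℕ} {x : X} (hx : x ∈ s)
    (hcard : (Function.support fun i => f i x).ncard ≤ m + 1) :
    ∃ i, ((m : ℝ) + 1)⁻¹ ≤ f i x := by
  have hfin : (Function.support fun i => f i x).Finite :=
    (f.locallyFinite.point_finite x).subset fun i hi => hi
  have hsum : ∑ i ∈ hfin.toFinset, f i x = 1 := by
    rw [← finsum_eq_sum_of_support_subset _ (by simp), f.sum_eq_one hx]
  have hne : hfin.toFinset.Nonempty := by
    by_contra! h
    simp [h] at hsum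
  have hcard' : (hfin.toFinset.card : ℝ) ≤ m + 1 := by
    rw [← ncard_eq_toFinset_card _ hfin]; exact_mod_cast hcard
  obtain ⟨i, -, hi⟩ := Finset.exists_le_of_sum_le (f := fun _ => ((m : ℝ) + 1)⁻¹)
    (g := fun i => f i x) hne <| by
    rw [Finset.sum_const, nsmul_eq_mul, hsum]
    calc (hfin.toFinset.card : ℝ) * ((m : ℝ) + 1)⁻¹ ≤ (m + 1) * ((m : ℝ) + 1)⁻¹ := by gcongr
      _ = 1 := mul_inv_cancel₀ (by positivity)
  exact ⟨i, hi⟩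

theorem ncard_setOf_forall_notMem_levelSet_le {k m : ℕ} {x : X} (hx : x ∈ s)
    (hcard : (Function.support fun i => f i x).ncard ≤ m + 1) {a b : Fin k → ℝ}
    (hab : ∀ c, 0 < b c ∧ b c ≤ a c ∧ a c < ((m : ℝ) + 1)⁻¹)
    (hdisj : Pairwise fun c c' => Disjoint (Icc (b c) (a c)) (Icc (b c') (a c'))) :
    {c | ∀ S, x ∉ f.levelSet (a c) (b c) S}.ncard ≤ m := by
  obtain ⟨imax, himax⟩ := f.exists_inv_le_apply hx hcard
  have : Nonempty ι := ⟨imax⟩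
  -- a missing colour `c` has a coordinate valued in its band `[b c, a c]`: distinct colours
  -- give distinct coordinates, none of them the one valued at least `1 / (m + 1)`
  choose! g hg using fun c (hc : c ∈ {c | ∀ S, x ∉ f.levelSet (a c) (b c) S}) =>
    f.exists_mem_Icc_of_forall_notMem_levelSet hc
  have hfin : (Function.support fun i => f i x).Finite :=
    (f.locallyFinite.point_finite x).subset fun i hi => hi
  have himax_mem : imax ∈ Function.support fun i => f i x :=
    ((inv_pos.2 (by positivity)).trans_le himax).ne'
  calc _ ≤ ((Function.support fun i => f i x) \ {imax}).ncard := by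
        refine ncard_le_ncard_of_injOn g (fun c hc => ⟨?_, ?_⟩) (fun c hc c' hc' hcc' => ?_)
          hfin.sdiff
        · exact ((hab c).1.trans_le (hg c hc).1).ne'
        · rintro rfl
          linarith [(hg c hc).2, (hab c).2.2]
        · by_contra hne
          exact (hdisj hne).ne_of_mem (hg c hc) (hcc' ▸ hg c' hc') rfl
    _ = (Function.support fun i => f i x).ncard - 1 := ncard_sdiff_singleton_of_mem himax_mem
    _ ≤ m := by omega

end PartitionOfUnity

theorem exists_pairwise_disjoint_Icc (k : ℕ) {θ : ℝ} (hθ : 0 < θ) :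
    ∃ a b : Fin k → ℝ, (∀ c, 0 < b c ∧ b c ≤ a c ∧ a c < θ) ∧
      Pairwise fun c c' => Disjoint (Icc (b c) (a c)) (Icc (b c') (a c')) := by
  set ε := θ / (2 * k + 2)
  have hε : 0 < ε := by positivity
  refine ⟨fun c => (2 * (c : ℕ) + 2) * ε, fun c => (2 * (c : ℕ) + 1) * ε,
    fun c => ⟨by positivity, by linarith, ?_⟩, fun c c' hcc' => ?_⟩
  · calc (2 * (c : ℕ) + 2) * ε < (2 * k + 2) * ε := by gcongr; exact c.2
      _ = θ := by simp only [ε]; field_simp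
  · have key : ∀ c c' : Fin k, c < c' → (2 * (c : ℕ) + 2) * ε < (2 * (c' : ℕ) + 1) * ε := by
      intro c c' h
      have : 2 * (c : ℕ) + 2 < 2 * (c' : ℕ) + 1 := by omega
      exact mul_lt_mul_of_pos_right (by exact_mod_cast this) hε
    rcases lt_or_gt_of_ne hcc' with h | h
    · exact disjoint_left.2 fun t ht ht' => by linarith [key c c' h, ht.2, ht'.1]
    · exact disjoint_left.2 fun t ht ht' => by linarith [key c' c h, ht.1, ht'.2]

theorem CovDimLE.exists_isColoredRefinement {Z : Type*} [TopologicalSpace Z] [NormalSpace Z]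
    [ParacompactSpace Z] {m : ℕ} (hZ : CovDimLE Z m) {ι : Type} (U : ι → Set Z)
    (hUo : ∀ i, IsOpen (U i)) (hUc : (⋃ i, U i) = univ) (k : ℕ) :
    ∃ W : Fin k → Set ι → Set Z, IsColoredRefinement U m W := by
  obtain ⟨V, hVo, hVU, hVc, hVord⟩ := hZ ι U hUo hUc
  obtain ⟨f, hf⟩ := PartitionOfUnity.exists_isSubordinate isClosed_univ V hVo hVc.symm.subset
  have hsupp : ∀ x, (Function.support fun i => f i x) ⊆ {i | x ∈ V i} :=
    fun x i hi => hf i (subset_tsupport _ hi)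
  have hcard x : (Function.support fun i => f i x).ncard ≤ m + 1 :=
    (ncard_le_ncard (hsupp x) (hVord x).1).trans (hVord x).2
  have hθ : (0 : ℝ) < ((m : ℝ) + 1)⁻¹ := by positivity
  obtain ⟨a, b, hab, hdisj⟩ := exists_pairwise_disjoint_Icc k hθ
  have ha c : 0 ≤ a c := (hab c).1.le.trans (hab c).2.1
  refine ⟨fun c => f.levelSet (a c) (b c), fun c S => f.isOpen_levelSet (ha c) (hab c).1,
    fun c S => ?_, fun c S S' x hS hS' => by rw [f.eq_of_mem_levelSet (hab c).2.1 hS hS'],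
    fun x => ?_⟩
  · rintro ⟨x, hx⟩
    obtain ⟨i, hi⟩ := f.exists_inv_le_apply (mem_univ x) (hcard x)
    have hiS : i ∈ S := by
      by_contra hiS
      linarith [hx.2 i hiS, (hab c).2.1, (hab c).2.2]
    exact ⟨i, fun y hy => hVU i (hsupp y (f.levelSet_subset_support (ha c) hiS hy))⟩
  · exact f.ncard_setOf_forall_notMem_levelSet_le (mem_univ x) (hcard x) hab hdisj

theorem CovDimLE.exists_isColoredRefinement_of_compactSpace {Z κ : Type*} [TopologicalSpace Z]
    [CompactSpace Z] [T2Space Z] {m : ℕ} (hZ : CovDimLE Z m) (U : κ → Set Z)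
    (hUo : ∀ i, IsOpen (U i)) (hUc : (⋃ i, U i) = univ) (k : ℕ) :
    ∃ (n : ℕ) (W : Fin k → Set (Fin n) → Set Z), IsColoredRefinement U m W := by
  obtain ⟨t, ht⟩ := isCompact_univ.elim_finite_subcover U hUo hUc.symm.subset
  let e := t.equivFin.symm
  have hc : ⋃ j, U (e j) = univ := by
    refine eq_univ_of_forall fun z => ?_
    obtain ⟨i, hi, hz⟩ := mem_iUnion₂.1 (ht (mem_univ z))
    exact mem_iUnion.2 ⟨t.equivFin ⟨i, hi⟩, by simpa [e] using hz⟩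
  obtain ⟨W, hW⟩ := hZ.exists_isColoredRefinement (fun j => U (e j)) (fun j => hUo _) hc k
  exact ⟨_, W, hW.mono fun j => ⟨e j, subset_rfl⟩⟩

section Grid

variable {k : ℕ} {ℓ t : ℝ} {c c' : Fin k} {j j' : ℤ}

noncomputable def gridPoint (k : ℕ) (ℓ : ℝ) (c : Fin k) (j : ℤ) : ℝ := (j + (c : ℕ) / k) * ℓ

theorem Fin.val_div_mem_Ico (c : Fin k) : ((c : ℕ) : ℝ) / k ∈ Ico 0 1 :=
  ⟨by positivity, (div_lt_one (by exact_mod_cast c.pos)).2 (by exact_mod_cast c.2)⟩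

theorem eq_of_gridPoint_eq (hℓ : ℓ ≠ 0) (h : gridPoint k ℓ c j = gridPoint k ℓ c' j') :
    c = c' := by
  have h' : (j : ℝ) + (c : ℕ) / k = j' + (c' : ℕ) / k := mul_right_cancel₀ hℓ h
  have hj : j = j' := by
    have := congrArg Int.floor h'
    rwa [Int.floor_intCast_add, Int.floor_intCast_add,
      Int.floor_eq_zero_iff.2 (Fin.val_div_mem_Ico c),
      Int.floor_eq_zero_iff.2 (Fin.val_div_mem_Ico c'), add_zero, add_zero] at this
  subst hj
  have hk : (k : ℝ) ≠ 0 := by exact_mod_cast c.pos.ne'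
  exact Fin.ext <| by exact_mod_cast (div_left_inj' hk).1 (add_left_cancel h')

theorem exists_mem_Ioo_gridPoint (hℓ : 0 < ℓ) (ht : ∀ j, t ≠ gridPoint k ℓ c j) :
    ∃ j, gridPoint k ℓ c j < t ∧ t < gridPoint k ℓ c j + ℓ := by
  set j := ⌊t / ℓ - (c : ℕ) / k⌋
  have hle : gridPoint k ℓ c j ≤ t := by
    have := Int.floor_le (t / ℓ - (c : ℕ) / k)
    rw [gridPoint, ← le_div_iff₀ hℓ]
    linarith
  refine ⟨j, hle.lt_of_ne (ht j).symm, ?_⟩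
  have := Int.lt_floor_add_one (t / ℓ - (c : ℕ) / k)
  have : t / ℓ < (j + (c : ℕ) / k) + 1 := by linarith
  rw [div_lt_iff₀ hℓ] at this
  simpa [gridPoint, add_mul] using this

theorem eq_of_mem_Ioo_gridPoint (hℓ : 0 < ℓ)
    (h : gridPoint k ℓ c j < t ∧ t < gridPoint k ℓ c j + ℓ)
    (h' : gridPoint k ℓ c j' < t ∧ t < gridPoint k ℓ c j' + ℓ) : j = j' := by
  have key : ∀ {j j' : ℤ}, gridPoint k ℓ c j < gridPoint k ℓ c j' + ℓ → j ≤ j' := by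
    intro j j' hjj'
    have : ((j : ℝ) - j') * ℓ < 1 * ℓ := by simp only [gridPoint] at hjj'; linarith
    have : (j : ℝ) < j' + 1 := by linarith [lt_of_mul_lt_mul_right this hℓ.le]
    exact_mod_cast Int.lt_add_one_iff.1 (by exact_mod_cast this)
  exact le_antisymm (key (h.1.trans h'.2)) (key (h'.1.trans h.2))

end Grid

section JoinPiece

variable {X Y κX κY : Type*} {k : ℕ} {ℓ : ℝ}
  {WX : Fin k → κX → Set X} {WY : Fin k → κY → Set Y}

def joinPiece (ℓ : ℝ) (WX : Fin k → κX → Set X) (WY : Fin k → κY → Set Y) (c : Fin k)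
    (a : ℤ × κX × κY) : Set (I × X × Y) :=
  {p | gridPoint k ℓ c a.1 < p.1 ∧ (p.1 : ℝ) < gridPoint k ℓ c a.1 + ℓ ∧
    (gridPoint k ℓ c a.1 ≤ 0 ∨ p.2.1 ∈ WX c a.2.1) ∧
    (1 - ℓ ≤ gridPoint k ℓ c a.1 ∨ p.2.2 ∈ WY c a.2.2)}

theorem isOpen_joinPiece [TopologicalSpace X] [TopologicalSpace Y]
    (hWX : ∀ c a, IsOpen (WX c a)) (hWY : ∀ c a, IsOpen (WY c a)) (c : Fin k)
    (a : ℤ × κX × κY) : IsOpen (joinPiece ℓ WX WY c a) := by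
  have hI : Continuous fun p : I × X × Y => (p.1 : ℝ) := by fun_prop
  refine (isOpen_lt continuous_const hI).inter <| (isOpen_lt hI continuous_const).inter <|
    (isOpen_const.union ((hWX c a.2.1).preimage (by fun_prop))).inter
    (isOpen_const.union ((hWY c a.2.2).preimage (by fun_prop)))

theorem joinPiece_respects_joinRel (c : Fin k) (a : ℤ × κX × κY) {p q : I × X × Y}
    (h : JoinRel X Y p q) : p ∈ joinPiece ℓ WX WY c a ↔ q ∈ joinPiece ℓ WX WY c a := by
  simp only [joinPiece, mem_ofPred_eq]
  rcases h with ⟨hp, hq, hy⟩ | ⟨hp, hq, hx⟩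
  · simp only [hp, hq, hy, Icc.coe_zero]
    constructor <;> rintro ⟨h₁, h₂, -, h₄⟩ <;> exact ⟨h₁, h₂, .inl h₁.le, h₄⟩
  · simp only [hp, hq, hx, Icc.coe_one]
    constructor <;> rintro ⟨h₁, h₂, h₃, -⟩ <;> exact ⟨h₁, h₂, h₃, .inl (by linarith)⟩

theorem eq_of_mem_joinPiece (hℓ : 0 < ℓ)
    (hWX : ∀ c a b x, x ∈ WX c a → x ∈ WX c b → WX c a = WX c b)
    (hWY : ∀ c a b y, y ∈ WY c a → y ∈ WY c b → WY c a = WY c b)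
    (c : Fin k) (a b : ℤ × κX × κY) (p : I × X × Y) (ha : p ∈ joinPiece ℓ WX WY c a)
    (hb : p ∈ joinPiece ℓ WX WY c b) : joinPiece ℓ WX WY c a = joinPiece ℓ WX WY c b := by
  obtain ⟨j, ax, ay⟩ := a
  obtain ⟨j', bx, by'⟩ := b
  obtain rfl : j = j' := eq_of_mem_Ioo_gridPoint hℓ ⟨ha.1, ha.2.1⟩ ⟨hb.1, hb.2.1⟩
  have hx : gridPoint k ℓ c j ≤ 0 ∨ WX c ax = WX c bx := by
    refine or_iff_not_imp_left.2 fun h => ?_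
    exact hWX c ax bx p.2.1 (ha.2.2.1.resolve_left h) (hb.2.2.1.resolve_left h)
  have hy : 1 - ℓ ≤ gridPoint k ℓ c j ∨ WY c ay = WY c by' := by
    refine or_iff_not_imp_left.2 fun h => ?_
    exact hWY c ay by' p.2.2 (ha.2.2.2.resolve_left h) (hb.2.2.2.resolve_left h)
  ext q
  simp only [joinPiece, mem_ofPred_eq]
  rcases hx with hx | hx <;> rcases hy with hy | hy <;> simp [hx, hy]

theorem ncard_missing_joinPiece_le {m n : ℕ} (hℓ : 0 < ℓ) (p : I × X × Y)
    (hX : {c | ∀ a, p.2.1 ∉ WX c a}.ncard ≤ m) (hY : {c | ∀ a, p.2.2 ∉ WY c a}.ncard ≤ n) :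
    {c | ∀ a, p ∉ joinPiece ℓ WX WY c a}.ncard ≤ m + n + 1 := by
  have hgrid : {c | ∃ j, (p.1 : ℝ) = gridPoint k ℓ c j}.ncard ≤ 1 :=
    (ncard_le_one (toFinite _)).2 fun c ⟨j, hc⟩ c' ⟨j', hc'⟩ =>
      eq_of_gridPoint_eq hℓ.ne' (hc.symm.trans hc')
  have hsub : {c | ∀ a, p ∉ joinPiece ℓ WX WY c a} ⊆
      {c | ∀ a, p.2.1 ∉ WX c a} ∪ {c | ∀ a, p.2.2 ∉ WY c a} ∪
        {c | ∃ j, (p.1 : ℝ) = gridPoint k ℓ c j} := by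
    intro c hc
    by_contra! h
    simp only [mem_union, mem_ofPred_eq, not_or, not_forall, not_not, not_exists] at h
    obtain ⟨⟨⟨ax, hax⟩, ⟨ay, hay⟩⟩, ht⟩ := h
    obtain ⟨j, hj⟩ := exists_mem_Ioo_gridPoint hℓ ht
    exact hc (j, ax, ay) ⟨hj.1, hj.2, .inr hax, .inr hay⟩
  calc _ ≤ _ := ncard_le_ncard hsub
    _ ≤ _ := ncard_union_le _ _
    _ ≤ _ := Nat.add_le_add_right (ncard_union_le _ _) _
    _ ≤ m + n + 1 := by omega

end JoinPiece

structure JoinGrid {X Y ι : Type*} [TopologicalSpace X] [TopologicalSpace Y]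
    (O : ι → Set (I × X × Y)) where
  ℓ : ℝ
  A : X → Set X
  B : Y → Set Y
  ℓ_pos : 0 < ℓ
  ℓ_lt_one : ℓ < 1
  isOpen_A : ∀ x, IsOpen (A x)
  mem_A : ∀ x, x ∈ A x
  isOpen_B : ∀ y, IsOpen (B y)
  mem_B : ∀ y, y ∈ B y
  near_zero : ∀ y, ∃ u, ∀ p : I × X × Y, (p.1 : ℝ) < ℓ → p.2.2 ∈ B y → p ∈ O u
  near_one : ∀ x, ∃ u, ∀ p : I × X × Y, 1 - ℓ < (p.1 : ℝ) → p.2.1 ∈ A x → p ∈ O u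
  middle : ∀ (s : ℝ) x y, ∃ u, ∀ p : I × X × Y,
    s < p.1 → (p.1 : ℝ) < s + ℓ → p.2.1 ∈ A x → p.2.2 ∈ B y → p ∈ O u

namespace JoinGrid

variable {X Y ι κX κY : Type*} [TopologicalSpace X] [TopologicalSpace Y]
  {O : ι → Set (I × X × Y)} {k m n : ℕ} {WX : Fin k → κX → Set X} {WY : Fin k → κY → Set Y}

theorem isColoredRefinement (G : JoinGrid O) (hX : IsColoredRefinement G.A m WX)
    (hY : IsColoredRefinement G.B n WY) :
    IsColoredRefinement O (m + n + 1) (joinPiece G.ℓ WX WY) where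
  isOpen := isOpen_joinPiece hX.isOpen hY.isOpen
  exists_subset := by
    rintro c ⟨j, ax, ay⟩ ⟨p, hp⟩
    set s := gridPoint k G.ℓ c j
    by_cases h0 : s ≤ 0
    · have h1 : ¬1 - G.ℓ ≤ s := by linarith [G.ℓ_lt_one]
      obtain ⟨y, hy⟩ := hY.exists_subset c ay ⟨p.2.2, hp.2.2.2.resolve_left h1⟩
      obtain ⟨u, hu⟩ := G.near_zero y
      exact ⟨u, fun q hq => hu q (by linarith [hq.2.1]) (hy (hq.2.2.2.resolve_left h1))⟩
    obtain ⟨x, hx⟩ := hX.exists_subset c ax ⟨p.2.1, hp.2.2.1.resolve_left h0⟩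
    by_cases h1 : 1 - G.ℓ ≤ s
    · obtain ⟨u, hu⟩ := G.near_one x
      exact ⟨u, fun q hq => hu q (by linarith [hq.1]) (hx (hq.2.2.1.resolve_left h0))⟩
    obtain ⟨y, hy⟩ := hY.exists_subset c ay ⟨p.2.2, hp.2.2.2.resolve_left h1⟩
    obtain ⟨u, hu⟩ := G.middle s x y
    exact ⟨u, fun q hq => hu q hq.1 hq.2.1 (hx (hq.2.2.1.resolve_left h0))
      (hy (hq.2.2.2.resolve_left h1))⟩
  eq_of_mem_of_mem := eq_of_mem_joinPiece G.ℓ_pos hX.eq_of_mem_of_mem hY.eq_of_mem_of_mem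
  ncard_missing_le p :=
    ncard_missing_joinPiece_le G.ℓ_pos p (hX.ncard_missing_le p.2.1) (hY.ncard_missing_le p.2.2)

end JoinGrid

theorem CompactSpace.exists_pos_forall_exists_mem_le {Y : Type*} [TopologicalSpace Y]
    [CompactSpace Y] {δ : Y → ℝ} (hδ : ∀ y, 0 < δ y) {B : Y → Set Y} (hB : ∀ y, B y ∈ 𝓝 y) :
    ∃ ε > 0, ∀ y, ∃ y', y ∈ B y' ∧ ε ≤ δ y' := by
  obtain ⟨F, hF⟩ := CompactSpace.elim_nhds_subcover B hB
  obtain ⟨ε, hε, hεF⟩ :=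
    ((eventually_all_finset F).2 fun y _ => eventually_lt_nhds (hδ y)).exists_gt
  refine ⟨ε, hε, fun y => ?_⟩
  obtain ⟨y', hy'F, hy⟩ := mem_iUnion₂.1 (hF.symm ▸ mem_univ y : y ∈ ⋃ y' ∈ F, B y')
  exact ⟨y', hy, (hεF y' hy'F).le⟩

theorem exists_ball_prod_subset_of_isOpen {T X Y : Type*} [PseudoMetricSpace T]
    [TopologicalSpace X] [TopologicalSpace Y] {O : Set (T × X × Y)} (hO : IsOpen O) {p : T × X × Y}
    (hp : p ∈ O) : ∃ ε > 0, ∃ A B, IsOpen A ∧ IsOpen B ∧ p.2.1 ∈ A ∧ p.2.2 ∈ B ∧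
      Metric.ball p.1 ε ×ˢ (A ×ˢ B) ⊆ O := by
  obtain ⟨N, M, hN, htN, hM, hM', hNM⟩ := mem_nhds_prod_iff'.1 (hO.mem_nhds hp)
  obtain ⟨A, B, hA, hxA, hB, hyB, hAB⟩ := mem_nhds_prod_iff'.1 (hM.mem_nhds hM')
  obtain ⟨ε, hε, hεN⟩ := Metric.isOpen_iff.1 hN p.1 htN
  exact ⟨ε, hε, A, B, hA, hB, hxA, hyB, (Set.prod_mono hεN hAB).trans hNM⟩

theorem exists_uniform_ball_prod_subset {T X Y ι : Type*} [PseudoMetricSpace T] [CompactSpace T]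
    [TopologicalSpace X] [CompactSpace X] [TopologicalSpace Y] [CompactSpace Y]
    {O : ι → Set (T × X × Y)} (hO : ∀ u, IsOpen (O u)) (hOc : ⋃ u, O u = univ) :
    ∃ ℓ > 0, ∃ (A : X → Set X) (B : Y → Set Y), (∀ x, IsOpen (A x) ∧ x ∈ A x) ∧
      (∀ y, IsOpen (B y) ∧ y ∈ B y) ∧
      ∀ t x y, ∃ u, Metric.ball t ℓ ×ˢ (A x ×ˢ B y) ⊆ O u := by
  classical
  have hbox (q : T × X × Y) := exists_ball_prod_subset_of_isOpen (hO _)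
    (mem_iUnion.1 (hOc.symm ▸ mem_univ q : q ∈ ⋃ u, O u)).choose_spec
  choose ε hε A B hA hB hxA hyB hsub using hbox
  obtain ⟨F, hF⟩ := CompactSpace.elim_nhds_subcover
    (fun q => Metric.ball q.1 (ε q / 2) ×ˢ (A q ×ˢ B q)) fun q =>
      prod_mem_nhds (Metric.ball_mem_nhds _ (half_pos (hε q)))
        (prod_mem_nhds ((hA q).mem_nhds (hxA q)) ((hB q).mem_nhds (hyB q)))
  obtain ⟨ℓ, hℓ, hℓF⟩ := ((eventually_all_finset F).2 fun q _ =>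
    eventually_lt_nhds (half_pos (hε q))).exists_gt
  -- the common refinement of the finitely many boxes through a point
  refine ⟨ℓ, hℓ, fun x => ⋂ q ∈ F.filter (x ∈ A ·), A q, fun y => ⋂ q ∈ F.filter (y ∈ B ·), B q,
    fun x => ⟨isOpen_biInter_finset fun q _ => hA q, mem_iInter₂.2 fun q hq => ?_⟩,
    fun y => ⟨isOpen_biInter_finset fun q _ => hB q, mem_iInter₂.2 fun q hq => ?_⟩,
    fun t x y => ?_⟩
  · exact (Finset.mem_filter.1 hq).2
  · exact (Finset.mem_filter.1 hq).2
  obtain ⟨q, hqF, htq, hxq, hyq⟩ := mem_iUnion₂.1 (hF.symm ▸ mem_univ (t, x, y) :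
    (t, x, y) ∈ ⋃ q ∈ F, Metric.ball q.1 (ε q / 2) ×ˢ (A q ×ˢ B q))
  refine ⟨_, fun p ⟨hpt, hpx, hpy⟩ => hsub q ⟨?_, ?_, ?_⟩⟩
  · rw [Metric.mem_ball] at hpt htq ⊢
    linarith [dist_triangle p.1 t q.1, hℓF q hqF]
  · exact mem_iInter₂.1 hpx q (Finset.mem_filter.2 ⟨hqF, hxq⟩)
  · exact mem_iInter₂.1 hpy q (Finset.mem_filter.2 ⟨hqF, hyq⟩)

section Tubes

variable {X Y ι : Type*} [TopologicalSpace X] [TopologicalSpace Y]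

theorem exists_tube_near_zero [CompactSpace X] {O : Set (I × X × Y)} (hO : IsOpen O) {y : Y}
    (h : ∀ x, ((0 : I), x, y) ∈ O) :
    ∃ δ > 0, ∃ B, IsOpen B ∧ y ∈ B ∧ ∀ p : I × X × Y, (p.1 : ℝ) < δ → p.2.2 ∈ B → p ∈ O := by
  obtain ⟨N, W, hN, hW, h0N, hyW, hNW⟩ := generalized_tube_lemma isCompact_singleton
    (isCompact_univ.prod isCompact_singleton) hO (by rintro ⟨_, x, _⟩ ⟨rfl, -, rfl⟩; exact h x)
  obtain ⟨M, B, -, hB, hXM, hyB, hMB⟩ :=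
    generalized_tube_lemma isCompact_univ isCompact_singleton hW hyW
  obtain ⟨δ, hδ, hball⟩ := Metric.isOpen_iff.1 hN 0 (h0N rfl)
  refine ⟨δ, hδ, B, hB, hyB rfl, fun p hp hpB => hNW ⟨hball ?_, hMB ⟨hXM (mem_univ _), hpB⟩⟩⟩
  rwa [Metric.mem_ball, Subtype.dist_eq, Icc.coe_zero, Real.dist_eq, sub_zero,
    abs_of_nonneg p.1.2.1]

theorem exists_uniform_tube_near_zero [CompactSpace X] [Nonempty X] [CompactSpace Y]
    {O : ι → Set (I × X × Y)} (hO : ∀ u, IsOpen (O u)) (hOc : ⋃ u, O u = univ)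
    (hsat : ∀ u x x' y, ((0 : I), x, y) ∈ O u → ((0 : I), x', y) ∈ O u) :
    ∃ δ > 0, ∃ B : Y → Set Y, (∀ y, IsOpen (B y) ∧ y ∈ B y) ∧
      ∀ y, ∃ u, ∀ p : I × X × Y, (p.1 : ℝ) < δ → p.2.2 ∈ B y → p ∈ O u := by
  have (y : Y) : ∃ δ > 0, ∃ B, IsOpen B ∧ y ∈ B ∧
      ∃ u, ∀ p : I × X × Y, (p.1 : ℝ) < δ → p.2.2 ∈ B → p ∈ O u := by
    obtain ⟨u, hu⟩ := mem_iUnion.1 (hOc ▸ mem_univ ((0 : I), Classical.arbitrary X, y))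
    obtain ⟨δ, hδ, B, hB, hyB, hsub⟩ := exists_tube_near_zero (hO u) fun x => hsat u _ x y hu
    exact ⟨δ, hδ, B, hB, hyB, u, hsub⟩
  choose δ hδ B hB hyB u hu using this
  obtain ⟨ε, hε, hε'⟩ := CompactSpace.exists_pos_forall_exists_mem_le hδ
    fun y => (hB y).mem_nhds (hyB y)
  choose y' hyy' hy' using hε'
  exact ⟨ε, hε, fun y => B (y' y), fun y => ⟨hB _, hyy' y⟩,
    fun y => ⟨u (y' y), fun p hp => hu _ p (hp.trans_le (hy' y))⟩⟩

theorem exists_uniform_tube_near_one [CompactSpace X] [CompactSpace Y] [Nonempty Y]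
    {O : ι → Set (I × X × Y)} (hO : ∀ u, IsOpen (O u)) (hOc : ⋃ u, O u = univ)
    (hsat : ∀ u x y y', ((1 : I), x, y) ∈ O u → ((1 : I), x, y') ∈ O u) :
    ∃ δ > 0, ∃ A : X → Set X, (∀ x, IsOpen (A x) ∧ x ∈ A x) ∧
      ∀ x, ∃ u, ∀ p : I × X × Y, 1 - δ < (p.1 : ℝ) → p.2.1 ∈ A x → p ∈ O u := by
  -- reflect: `(t, x, y) ↦ (1 - t, y, x)` exchanges the two ends of the join
  let r (p : I × Y × X) : I × X × Y := (σ p.1, p.2.2, p.2.1)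
  have hr : Continuous r := by fun_prop
  obtain ⟨δ, hδ, A, hA, hsub⟩ := exists_uniform_tube_near_zero (O := fun u => r ⁻¹' O u)
    (fun u => (hO u).preimage hr)
    (by rw [← preimage_iUnion, hOc, preimage_univ])
    fun u y y' x h => by simpa [r] using hsat u x y y' (by simpa [r] using h)
  refine ⟨δ, hδ, A, hA, fun x => ?_⟩
  obtain ⟨u, hu⟩ := hsub x
  refine ⟨u, fun p hp hpA => ?_⟩
  simpa [r] using hu (σ p.1, p.2.2, p.2.1) (by rw [coe_symm_eq]; linarith) hpA

end Tubes

theorem JoinGrid.nonempty {X Y ι : Type*} [TopologicalSpace X] [CompactSpace X] [Nonempty X]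
    [TopologicalSpace Y] [CompactSpace Y] [Nonempty Y] {O : ι → Set (I × X × Y)}
    (hO : ∀ u, IsOpen (O u)) (hOc : ⋃ u, O u = univ)
    (hsat : ∀ u p q, JoinRel X Y p q → p ∈ O u → q ∈ O u) : Nonempty (JoinGrid O) := by
  obtain ⟨δ₀, hδ₀, B₀, hB₀, h₀⟩ := exists_uniform_tube_near_zero hO hOc
    fun u x x' y => hsat u _ _ (.inl ⟨rfl, rfl, rfl⟩)
  obtain ⟨δ₁, hδ₁, A₁, hA₁, h₁⟩ := exists_uniform_tube_near_one hO hOc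
    fun u x y y' => hsat u _ _ (.inr ⟨rfl, rfl, rfl⟩)
  obtain ⟨ε, hε, A₂, B₂, hA₂, hB₂, hbox⟩ := exists_uniform_ball_prod_subset hO hOc
  set ℓ := min (min δ₀ δ₁) (min ε (1 / 2))
  have hℓ₀ : ℓ ≤ δ₀ := (min_le_left _ _).trans (min_le_left _ _)
  have hℓ₁ : ℓ ≤ δ₁ := (min_le_left _ _).trans (min_le_right _ _)
  have hℓ : ℓ ≤ ε := (min_le_right _ _).trans (min_le_left _ _)
  have hℓ_half : ℓ ≤ 1 / 2 := (min_le_right _ _).trans (min_le_right _ _)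
  refine ⟨{
    ℓ := ℓ
    A := fun x => A₁ x ∩ A₂ x
    B := fun y => B₀ y ∩ B₂ y
    ℓ_pos := lt_min (lt_min hδ₀ hδ₁) (lt_min hε (by norm_num))
    ℓ_lt_one := by linarith
    isOpen_A := fun x => (hA₁ x).1.inter (hA₂ x).1
    mem_A := fun x => ⟨(hA₁ x).2, (hA₂ x).2⟩
    isOpen_B := fun y => (hB₀ y).1.inter (hB₂ y).1
    mem_B := fun y => ⟨(hB₀ y).2, (hB₂ y).2⟩
    near_zero := fun y => (h₀ y).imp fun u hu p hp hpB => hu p (by linarith) hpB.1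
    near_one := fun x => (h₁ x).imp fun u hu p hp hpA => hu p (by linarith) hpA.1
    middle := fun s x y => ?_ }⟩
  -- the box through the point of `I` nearest to the midpoint of `(s, s + ℓ)`
  obtain ⟨u, hu⟩ := hbox (projIcc 0 1 zero_le_one (s + ℓ / 2)) x y
  refine ⟨u, fun p hs hsℓ hpA hpB => hu ⟨?_, hpA.2, hpB.2⟩⟩
  rw [Metric.mem_ball, Subtype.dist_eq, Real.dist_eq, ← projIcc_val zero_le_one p.1]
  refine (abs_projIcc_sub_projIcc zero_le_one).trans_lt ?_
  rw [abs_sub_lt_iff]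
  constructor <;> linarith

/-- For compact Hausdorff spaces `X` and `Y`, `dim(X ∗ Y) ≤ 1 + dim(X) + dim(Y)`. -/
theorem covDim_join_le (X Y : Type*)
    [TopologicalSpace X] [CompactSpace X] [T2Space X]
    [TopologicalSpace Y] [CompactSpace Y] [T2Space Y]
    (m n : ℕ) (hX : CovDimLE X m) (hY : CovDimLE Y n) :
    CovDimLE (Join X Y) (1 + m + n) := by
  intro ι U hUo hUc
  rcases isEmpty_or_nonempty (Join X Y) with hZ | ⟨⟨z⟩⟩
  · exact ⟨U, hUo, fun _ => subset_rfl, hUc, isEmptyElim⟩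
  obtain ⟨⟨-, x₀, y₀⟩, -⟩ := Join.isQuotientMap_mk.surjective z
  have : Nonempty X := ⟨x₀⟩
  have : Nonempty Y := ⟨y₀⟩
  obtain ⟨G⟩ := JoinGrid.nonempty (O := fun u => Join.mk ⁻¹' U u)
    (fun u => (hUo u).preimage Join.isQuotientMap_mk.continuous)
    (by rw [← preimage_iUnion, hUc, preimage_univ])
    fun u p q hpq hp => by rwa [mem_preimage, ← Join.mk_eq_mk hpq]
  obtain ⟨_, WX, hWX⟩ := hX.exists_isColoredRefinement_of_compactSpace G.A G.isOpen_A
    (eq_univ_of_forall fun x => mem_iUnion.2 ⟨x, G.mem_A x⟩) (1 + m + n + 1)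
  obtain ⟨_, WY, hWY⟩ := hY.exists_isColoredRefinement_of_compactSpace G.B G.isOpen_B
    (eq_univ_of_forall fun y => mem_iUnion.2 ⟨y, G.mem_B y⟩) (1 + m + n + 1)
  refine ((G.isColoredRefinement hWX hWY).image_of_isQuotientMap Join.isQuotientMap_mk
    fun c a => Quot.preimage_image_mk fun p q => joinPiece_respects_joinRel c a).exists_shrinking
    (by omega)
end

section
/- Let G be a group and H a subgroup of finite index. Then there exists a finite set Y ⊆ G that is simultaneously a complete set of left coset representatives and a complete set of right coset representatives of H in G, i.e. G is both the disjoint union of the sets yH for y ∈ Y and the disjoint union of the sets Hy for y ∈ Y. -/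
/-!
For finite `G`, join a left coset to a right coset of `H` when they meet. This bipartite graph
satisfies Hall's condition: `k` left cosets have `k * |H|` elements between them, so they meet at
least `k` right cosets. A perfect matching pairs every left coset `L` with a right coset meeting it,
and one element of each `L ∩ M` gives the common representatives. In general, pass to the finite
group `G ⧸ N`, where `N` is the normal core of `H`, and lift the representatives along a section.
-/

open Function QuotientGroup Subgroup

theorem existsUnique_subtype_iff {α : Type*} {S : Set α} {p : α → Prop} :
    (∃! s : S, p s) ↔ ∃! x, x ∈ S ∧ p x := by
  constructor
  · rintro ⟨⟨x, hx⟩, hpx, huniq⟩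
    exact ⟨x, ⟨hx, hpx⟩, fun y hy => congrArg Subtype.val (huniq ⟨y, hy.1⟩ hy.2)⟩
  · rintro ⟨x, ⟨hx, hpx⟩, huniq⟩
    exact ⟨⟨x, hx⟩, hpx, fun y hy => Subtype.ext (huniq y ⟨y.2, hy⟩)⟩

theorem existsUnique_mem_image_of_leftInverse {α β : Type*} {f : α → β} {s : β → α}
    (hs : LeftInverse f s) {Y : Set β} {p : β → Prop} (h : ∃! y, y ∈ Y ∧ p y) :
    ∃! x, x ∈ s '' Y ∧ p (f x) := by
  obtain ⟨y, ⟨hy, hpy⟩, huniq⟩ := h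
  refine ⟨s y, ⟨Set.mem_image_of_mem s hy, by rwa [hs]⟩, ?_⟩
  rintro _ ⟨⟨y', hy', rfl⟩, hpy'⟩
  rw [huniq y' ⟨hy', by rwa [hs] at hpy'⟩]

theorem QuotientGroup.card_preimage_mk_rightRel {G : Type*} [Group G] (H : Subgroup G)
    (t : Set (Quotient (rightRel H))) :
    Nat.card (Quotient.mk'' ⁻¹' t : Set G) = Nat.card H * Nat.card t := by
  let e := quotientRightRelEquivQuotientLeftRel H
  have hinv : (Quotient.mk'' ⁻¹' t : Set G) = ((↑) ⁻¹' (e '' t) : Set G)⁻¹ := by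
    ext g
    rw [Set.mem_inv, Set.mem_preimage, e.image_eq_preimage_symm]
    show _ ↔ Quotient.mk'' g⁻¹⁻¹ ∈ t
    rw [inv_inv]
  rw [hinv, Set.natCard_inv, card_preimage_mk, Nat.card_image_of_injective e.injective]

namespace Subgroup

variable {G Q : Type*} [Group G] [Group Q]

theorem isComplement_iff_existsUnique_mem_inv_mul_mem {S : Set G} {H : Subgroup G} :
    IsComplement S H ↔ ∀ g, ∃! s, s ∈ S ∧ s⁻¹ * g ∈ H := by
  rw [isComplement_iff_existsUnique_inv_mul_mem]
  exact forall_congr' fun g => existsUnique_subtype_iff (p := fun s => s⁻¹ * g ∈ H)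

theorem isComplement_iff_existsUnique_mem_mul_inv_mem {S : Set G} {H : Subgroup G} :
    IsComplement H S ↔ ∀ g, ∃! s, s ∈ S ∧ g * s⁻¹ ∈ H := by
  rw [isComplement_iff_existsUnique_mul_inv_mem]
  exact forall_congr' fun g => existsUnique_subtype_iff (p := fun s => g * s⁻¹ ∈ H)

theorem IsComplement.image_comap_of_rightInverse {π : G →* Q} {s : Q → G}
    (hs : RightInverse s π) {S : Set Q} {K : Subgroup Q} (h : IsComplement S K) :
    IsComplement (s '' S) (K.comap π) := by
  rw [isComplement_iff_existsUnique_mem_inv_mul_mem] at h ⊢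
  intro g
  simpa using existsUnique_mem_image_of_leftInverse hs (h (π g))

theorem IsComplement.comap_image_of_rightInverse {π : G →* Q} {s : Q → G}
    (hs : RightInverse s π) {S : Set Q} {K : Subgroup Q} (h : IsComplement K S) :
    IsComplement (K.comap π) (s '' S) := by
  rw [isComplement_iff_existsUnique_mem_mul_inv_mem] at h ⊢
  intro g
  simpa using existsUnique_mem_image_of_leftInverse hs (h (π g))

variable (H : Subgroup G)

def CosetsMeet (L : G ⧸ H) (M : Quotient (rightRel H)) : Prop :=
  ∃ g : G, (g : G ⧸ H) = L ∧ Quotient.mk'' g = M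

theorem card_le_card_cosetsMeet [Finite G] (A : Set (G ⧸ H)) :
    Nat.card A ≤ Nat.card {M | ∃ L ∈ A, CosetsMeet H L M} := by
  have hsub : ((↑) ⁻¹' A : Set G) ⊆ Quotient.mk'' ⁻¹' {M | ∃ L ∈ A, CosetsMeet H L M} :=
    fun g hg => ⟨g, hg, g, rfl, rfl⟩
  have hcard := Nat.card_mono (Set.toFinite _) hsub
  rw [card_preimage_mk, card_preimage_mk_rightRel] at hcard
  exact Nat.le_of_mul_le_mul_left hcard Nat.card_pos

theorem exists_isComplement_left_right_of_equiv (e : G ⧸ H ≃ Quotient (rightRel H))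
    (he : ∀ L, CosetsMeet H L (e L)) : ∃ S : Set G, IsComplement S H ∧ IsComplement H S := by
  choose g hgL hgR using he
  refine ⟨Set.range g, isComplement_range_left hgL, ?_⟩
  rw [← e.symm.surjective.range_comp]
  exact isComplement_range_right fun M => by simp [hgR]

theorem exists_isComplement_left_right_of_finite [Finite G] :
    ∃ S : Set G, IsComplement S H ∧ IsComplement H S := by
  classical
  have := Fintype.ofFinite (Quotient (rightRel H))
  obtain ⟨f, hf, hmeet⟩ := (Fintype.all_card_le_filter_rel_iff_exists_injective (CosetsMeet H)).1
    fun A => by simpa [Set.ncard_coe_finset] using card_le_card_cosetsMeet H A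
  have hbij : Bijective f :=
    hf.bijective_of_nat_card_le (Nat.card_congr (quotientRightRelEquivQuotientLeftRel H)).le
  exact exists_isComplement_left_right_of_equiv H (.ofBijective f hbij) hmeet

end Subgroup

/-- Ore's theorem on common coset representatives: if `H` is a subgroup of finite index in
`G`, there is a finite set `Y` that is simultaneously a complete set of left coset
representatives and a complete set of right coset representatives of `H` in `G`:
every `g` lies in `yH` for a unique `y ∈ Y`, and in `Hy` for a unique `y ∈ Y`. -/
theorem exists_common_coset_representatives (G : Type*) [Group G]
    (H : Subgroup G) (hH : H.index ≠ 0) :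
    ∃ Y : Finset G,
      (∀ g : G, ∃! y, y ∈ Y ∧ y⁻¹ * g ∈ H) ∧
      (∀ g : G, ∃! y, y ∈ Y ∧ g * y⁻¹ ∈ H) := by
  have : H.FiniteIndex := ⟨hH⟩
  let π := QuotientGroup.mk' H.normalCore
  obtain ⟨s, hs⟩ := (QuotientGroup.mk'_surjective H.normalCore).hasRightInverse
  obtain ⟨S, hSl, hSr⟩ := exists_isComplement_left_right_of_finite (H.map π)
  have hcomap : (H.map π).comap π = H :=
    comap_map_eq_self (by rw [ker_mk']; exact normalCore_le H)
  have hTl := hSl.image_comap_of_rightInverse hs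
  have hTr := hSr.comap_image_of_rightInverse hs
  rw [hcomap] at hTl hTr
  refine ⟨hTl.finite_left.toFinset, ?_, ?_⟩
  · simpa using isComplement_iff_existsUnique_mem_inv_mul_mem.1 hTl
  · simpa using isComplement_iff_existsUnique_mem_mul_inv_mem.1 hTr
end

section
/- Let G be a residually finite group and H a subgroup of finite index. Then there is a finite set Y and an H-equivariant homeomorphism Y × H̄ → Ḡ, where H acts trivially on Y, by left translation on its profinite completion H̄, and by left translation on Ḡ. -/
/-- The (index) family of finite-index normal subgroups of `G`. -/
def FinIndexNormal (G : Type*) [Group G] : Type _ :=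
  {N : Subgroup G // N.Normal ∧ N.index ≠ 0}

instance {G : Type*} [Group G] (N : FinIndexNormal G) : N.1.Normal := N.2.1

/-- Each finite quotient carries the discrete topology. -/
instance {G : Type*} [Group G] (N : FinIndexNormal G) : TopologicalSpace (G ⧸ N.1) := ⊥

/-- The connecting map `G ⧸ N → G ⧸ M` for `N ≤ M`. -/
def transMap {G : Type*} [Group G] {N M : FinIndexNormal G} (h : N.1 ≤ M.1) :
    G ⧸ N.1 →* G ⧸ M.1 :=
  QuotientGroup.map N.1 M.1 (MonoidHom.id G) (fun _ hg => h hg)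

/-- The profinite completion of `G` as the subgroup of compatible families in
`∏_N G ⧸ N` over all finite-index normal subgroups `N` of `G`. -/
def profCompSubgroup (G : Type*) [Group G] : Subgroup (∀ N : FinIndexNormal G, G ⧸ N.1) where
  carrier := {x | ∀ (N M : FinIndexNormal G) (h : N.1 ≤ M.1), transMap h (x N) = x M}
  mul_mem' := by
    intro a b ha hb N M h
    simp only [Pi.mul_apply, map_mul, ha N M h, hb N M h]
  one_mem' := by
    intro N M h
    simp only [Pi.one_apply, map_one]
  inv_mem' := by
    intro a ha N M h
    simp only [Pi.inv_apply, map_inv, ha N M h]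

/-- The profinite completion `Ḡ` of `G`. -/
def ProfComp (G : Type*) [Group G] : Type _ := ↥(profCompSubgroup G)

instance {G : Type*} [Group G] : Group (ProfComp G) :=
  inferInstanceAs (Group ↥(profCompSubgroup G))

instance {G : Type*} [Group G] : TopologicalSpace (ProfComp G) :=
  inferInstanceAs (TopologicalSpace ↥(profCompSubgroup G))

/-- The canonical map `ι : G → Ḡ`, `g ↦ (gN)_N`, as a group homomorphism. -/
def iotaHom (G : Type*) [Group G] : G →* ProfComp G where
  toFun g := ⟨fun N => QuotientGroup.mk g, fun _ _ _ => rfl⟩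
  map_one' := Subtype.ext (funext fun _ => rfl)
  map_mul' := fun _ _ => Subtype.ext (funext fun _ => rfl)

/-- `G` is residually finite: every non-identity element survives in some finite quotient. -/
def ResiduallyFinite (G : Type*) [Group G] : Prop :=
  ∀ g : G, g ≠ 1 → ∃ N : Subgroup G, N.Normal ∧ N.index ≠ 0 ∧ g ∉ N

/-!
Both completions are compact Hausdorff, and `ι(G)` is dense in `Ḡ`. The inclusion `H → G`
induces a continuous homomorphism `j : H̄ → Ḡ`, injective because every finite-index normal
subgroup of `H` contains `N ∩ H` for some finite-index normal subgroup `N` of `G`. For a right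
transversal `T` of `H` the map `(t, x) ↦ j(x) ι(t)` is `H`-equivariant. It is injective: the
component at the normal core of `H` recovers the coset `Ht`. It is surjective: its image is a
finite union of compact sets, hence closed, and contains `ι(G) = ⋃ₜ ι(H) ι(t)`. A continuous
bijection from a compact space to a Hausdorff space is a homeomorphism.
-/
section

variable {G G' : Type*} [Group G] [Group G']

namespace FinIndexNormal

def comap (f : G' →* G) (N : FinIndexNormal G) : FinIndexNormal G' :=
  ⟨N.1.comap f, N.2.1.comap f, by
    simpa using Subgroup.relIndex_comap_ne_zero f (K := ⊤) (by simpa using N.2.2)⟩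

def inf (N M : FinIndexNormal G) : FinIndexNormal G :=
  ⟨N.1 ⊓ M.1, inferInstance, Subgroup.index_inf_ne_zero N.2.2 M.2.2⟩

def normalCore (K : Subgroup G) (hK : K.index ≠ 0) : FinIndexNormal G :=
  ⟨K.normalCore, K.normalCore_normal, by
    have : K.FiniteIndex := ⟨hK⟩
    exact Subgroup.FiniteIndex.index_ne_zero⟩

theorem exists_le_of_finset (s : Finset (FinIndexNormal G)) :
    ∃ N : FinIndexNormal G, ∀ M ∈ s, N.1 ≤ M.1 :=
  Directed.finset_le (r := (· ≥ ·)) (hι := ⟨⟨⊤, inferInstance, by simp⟩⟩)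
    (f := Subtype.val) (fun N M => ⟨inf N M, inf_le_left, inf_le_right⟩) s

instance (N : FinIndexNormal G) : Finite (G ⧸ N.1) :=
  have : N.1.FiniteIndex := ⟨N.2.2⟩
  inferInstance

instance (N : FinIndexNormal G) : DiscreteTopology (G ⧸ N.1) := ⟨rfl⟩

end FinIndexNormal

theorem isClosed_profCompSubgroup :
    IsClosed (profCompSubgroup G : Set (∀ N : FinIndexNormal G, G ⧸ N.1)) := by
  simp only [profCompSubgroup, Subgroup.coe_set_mk, Submonoid.coe_set_mk,
    Subsemigroup.coe_set_mk, Set.ofPred_forall]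
  exact isClosed_iInter fun N => isClosed_iInter fun M => isClosed_iInter fun _ =>
    isClosed_eq (continuous_of_discreteTopology.comp (continuous_apply N)) (continuous_apply M)

namespace ProfComp

theorem apply_eq_of_le (x : ProfComp G) {N M : FinIndexNormal G} (h : N.1 ≤ M.1) {g : G}
    (hg : x.1 N = g) : x.1 M = g := by
  rw [← x.2 N M h, hg]
  rfl

instance : CompactSpace (ProfComp G) :=
  isCompact_iff_compactSpace.mp (isClosed_profCompSubgroup (G := G)).isCompact

instance : T2Space (ProfComp G) :=
  inferInstanceAs (T2Space (profCompSubgroup G))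

instance : ContinuousMul (ProfComp G) :=
  inferInstanceAs (ContinuousMul (profCompSubgroup G))

theorem denseRange_iotaHom : DenseRange (iotaHom G) := by
  intro z
  rw [mem_closure_iff_nhds]
  intro s hs
  obtain ⟨u, hu, hus⟩ := (mem_nhds_subtype _ z s).1 hs
  rw [nhds_pi, Filter.mem_pi] at hu
  obtain ⟨I, hI, v, hv, hIv⟩ := hu
  obtain ⟨N, hN⟩ := FinIndexNormal.exists_le_of_finset hI.toFinset
  obtain ⟨g, hg⟩ := QuotientGroup.mk_surjective (z.1 N)
  refine ⟨iotaHom G g, hus (hIv fun M hM => ?_), g, rfl⟩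
  have hzM : z.1 M ∈ v M := mem_of_mem_nhds (hv M)
  rwa [z.apply_eq_of_le (hN M (hI.mem_toFinset.2 hM)) hg.symm] at hzM

def map (f : G' →* G) : ProfComp G' →* ProfComp G where
  toFun x := ⟨fun N => QuotientGroup.map _ N.1 f le_rfl (x.1 (N.comap f)), by
    intro N M h
    obtain ⟨a, ha⟩ := QuotientGroup.mk_surjective (x.1 (N.comap f))
    beta_reduce
    rw [← ha, x.apply_eq_of_le (Subgroup.comap_mono h) ha.symm]
    rfl⟩
  map_one' := Subtype.ext (funext fun _ => map_one _)
  map_mul' x y := Subtype.ext (funext fun _ => map_mul _ _ _)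

theorem map_apply_of_eq (f : G' →* G) {x : ProfComp G'} {N : FinIndexNormal G} {a : G'}
    (ha : x.1 (N.comap f) = a) : (map f x).1 N = (f a : G ⧸ N.1) := by
  change QuotientGroup.map _ _ f le_rfl (x.1 (N.comap f)) = _
  rw [ha]
  rfl

theorem map_iotaHom (f : G' →* G) (g : G') : map f (iotaHom G' g) = iotaHom G (f g) := rfl

theorem continuous_map (f : G' →* G) : Continuous (map f) :=
  (continuous_pi fun _ => continuous_of_discreteTopology.comp
    ((continuous_apply _).comp continuous_subtype_val)).subtype_mk _

section Subgroup

variable {H : Subgroup G}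

theorem mem_of_iotaHom_eq_map_subtype (hH : H.index ≠ 0) {g : G} {x : ProfComp H}
    (hgx : iotaHom G g = map H.subtype x) : g ∈ H := by
  let C := FinIndexNormal.normalCore H hH
  obtain ⟨a, ha⟩ := QuotientGroup.mk_surjective (x.1 (C.comap H.subtype))
  have hC : (g : G ⧸ C.1) = ((a : G) : G ⧸ C.1) :=
    (congrArg (·.1 C) hgx).trans (map_apply_of_eq _ ha.symm)
  have hga : g⁻¹ * a ∈ H := H.normalCore_le (QuotientGroup.eq.1 hC)
  simpa using H.mul_mem hga (H.inv_mem a.2)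

theorem map_subtype_injective (hH : H.index ≠ 0) : Function.Injective (map H.subtype) := by
  rw [injective_iff_map_eq_one]
  intro x hx
  refine Subtype.ext (funext fun M => ?_)
  let N := FinIndexNormal.normalCore (M.1.map H.subtype)
    (by rw [Subgroup.index_map_subtype]; exact mul_ne_zero M.2.2 hH)
  have hNM : (N.comap H.subtype).1 ≤ M.1 :=
    (Subgroup.comap_mono (Subgroup.normalCore_le _)).trans
      (Subgroup.comap_map_eq_self_of_injective H.subtype_injective M.1).le
  obtain ⟨a, ha⟩ := QuotientGroup.mk_surjective (x.1 (N.comap H.subtype))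
  have haN : (a : G) ∈ N.1 := by
    rw [← QuotientGroup.eq_one_iff]
    exact (map_apply_of_eq _ ha.symm).symm.trans (congrArg (·.1 N) hx)
  rw [x.apply_eq_of_le hNM ha.symm]
  exact (QuotientGroup.eq_one_iff a).2 (hNM haN)

def transversalMul (H : Subgroup G) (T : Set G) (p : T × ProfComp H) : ProfComp G :=
  map H.subtype p.2 * iotaHom G p.1

variable {T : Set G}

theorem transversalMul_iotaHom_mul (h : H) (t : T) (x : ProfComp H) :
    transversalMul H T (t, iotaHom H h * x) = iotaHom G h * transversalMul H T (t, x) := by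
  simp only [transversalMul, map_mul, map_iotaHom, Subgroup.coe_subtype, mul_assoc]

theorem continuous_transversalMul_mk (t : T) :
    Continuous fun x => transversalMul H T (t, x) :=
  (continuous_mul_const (iotaHom G t)).comp (continuous_map H.subtype)

theorem transversalMul_injective (hH : H.index ≠ 0) (hT : Subgroup.IsComplement H T) :
    Function.Injective (transversalMul H T) := by
  rintro ⟨t₁, x₁⟩ ⟨t₂, x₂⟩ h
  have ht : (t₁ : G) * (t₂ : G)⁻¹ ∈ H := by
    refine mem_of_iotaHom_eq_map_subtype hH (x := x₁⁻¹ * x₂) ?_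
    rw [map_mul, map_inv, map_mul, map_inv, mul_inv_eq_iff_eq_mul, mul_assoc,
      eq_inv_mul_iff_mul_eq]
    exact h
  obtain rfl : t₁ = t₂ :=
    (Subgroup.isComplement_iff_existsUnique_mul_inv_mem.1 hT t₁).unique (by simp) ht
  obtain rfl : x₁ = x₂ := map_subtype_injective hH (mul_right_cancel h)
  rfl

theorem transversalMul_surjective (hH : H.index ≠ 0) (hT : Subgroup.IsComplement H T) :
    Function.Surjective (transversalMul H T) := by
  have : Finite T := hT.finite_right_iff.2 ⟨hH⟩
  have hrange : Set.range (transversalMul H T) =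
      ⋃ t, Set.range fun x => transversalMul H T (t, x) := by
    ext
    simp
  have hclosed : IsClosed (Set.range (transversalMul H T)) := by
    rw [hrange]
    exact (isCompact_iUnion fun t => isCompact_range (continuous_transversalMul_mk t)).isClosed
  have hsub : Set.range (iotaHom G) ⊆ Set.range (transversalMul H T) := by
    rintro _ ⟨g, rfl⟩
    obtain ⟨⟨h, t⟩, rfl⟩ := hT.2 g
    exact ⟨(t, iotaHom H ⟨h, h.2⟩), rfl⟩
  rw [← Set.range_eq_univ, Set.eq_univ_iff_forall]
  exact fun z => hclosed.closure_subset_iff.2 hsub (denseRange_iotaHom z)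

end Subgroup

end ProfComp

end

theorem profComp_finiteIndex_product_general (G : Type*) [Group G]
    (H : Subgroup G) (hH : H.index ≠ 0) :
    ∃ (Y : Type) (_ : Fintype Y) (_ : TopologicalSpace Y) (_ : DiscreteTopology Y)
      (θ : Y × ProfComp ↥H ≃ₜ ProfComp G),
      ∀ (h : ↥H) (y : Y) (x : ProfComp ↥H),
        θ (y, iotaHom ↥H h * x) = iotaHom G (h : G) * θ (y, x) := by
  obtain ⟨T, hT, -⟩ := Subgroup.exists_isComplement_right H 1
  have : Finite T := hT.finite_right_iff.2 ⟨hH⟩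
  let θ : Fin H.index × ProfComp H ≃ ProfComp G :=
    ((Finite.equivFinOfCardEq hT.card_right).symm.prodCongr (Equiv.refl _)).trans
      (Equiv.ofBijective _
        ⟨ProfComp.transversalMul_injective hH hT, ProfComp.transversalMul_surjective hH hT⟩)
  have hθ : Continuous θ :=
    continuous_prod_of_discrete_left.2 fun _ => ProfComp.continuous_transversalMul_mk _
  exact ⟨_, inferInstance, inferInstance, inferInstance, hθ.homeoOfEquivCompactToT2,
    fun h _ x => ProfComp.transversalMul_iotaHom_mul h _ x⟩

/-- Let `G` be a residually finite group and `H` a subgroup of finite index. Then there is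
a finite set `Y` and an `H`-equivariant homeomorphism `Y × H̄ → Ḡ`, where `H` acts
trivially on `Y` and by left translation on both profinite completions. -/
theorem profComp_finiteIndex_product (G : Type*) [Group G] (hG : ResiduallyFinite G)
    (H : Subgroup G) (hH : H.index ≠ 0) :
    ∃ (Y : Type) (_ : Fintype Y) (_ : TopologicalSpace Y) (_ : DiscreteTopology Y)
      (θ : Y × ProfComp ↥H ≃ₜ ProfComp G),
      ∀ (h : ↥H) (y : Y) (x : ProfComp ↥H),
        θ (y, iotaHom ↥H h * x) = iotaHom G (h : G) * θ (y, x) :=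
  profComp_finiteIndex_product_general G H hH
end

section
/- Let A be a C*-algebra, G a discrete amenable group acting on A by an action β, and D ⊆ A a β-invariant hereditary C*-subalgebra. Then for every finite subset M ⊆ G, every finite subset F ⊆ D, and every η > 0, there exists a positive contraction q ∈ D such that ‖β_s(q) − q‖ < η for all s ∈ M, and ‖qa − a‖ < η, ‖aq − a‖ < η, ‖qa − aq‖ < η for all a ∈ F. -/
open scoped symmDiff

/-- The Følner condition for a discrete group `G` (equivalent to amenability): for every
finite set `M` and `ε > 0` there is a nonempty finite set `K` with
`|sK ∆ K| ≤ ε |K|` for all `s ∈ M`. -/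
def FolnerCondition (G : Type*) [Group G] [DecidableEq G] : Prop :=
  ∀ (M : Finset G) (ε : ℝ), 0 < ε → ∃ K : Finset G, K.Nonempty ∧
    ∀ s ∈ M, ((K.image (s * ·)) ∆ K).card ≤ ε * K.card

/-!
Let `e ∈ D` be an element of the approximate unit of `D` that is `η/3`-close to a unit on the
finitely many elements `β_g⁻¹(a)`, `g ∈ K`, `a ∈ F`, where `K` is a Følner set for `M`. The orbit
average `q = |K|⁻¹ ∑_{g ∈ K} β_g(e)` is again a positive contraction of `D`; it is close to a unit
on `F` because each `β_g(e)` is close to a unit on `β_g(β_g⁻¹(F)) = F`, and `β_s(q) - q` only sees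
the `|sK ∆ K| ≤ (η/2) |K|` terms in which the sums over `sK` and `K` differ.
-/

open Finset

namespace NonUnitalStarSubalgebra

variable {A : Type*} [NonUnitalCStarAlgebra A] [PartialOrder A] [StarOrderedRing A]
  (D : NonUnitalStarSubalgebra ℂ A) [IsClosed (D : Set A)]

instance : StarOrderedRing D :=
  StarOrderedRing.of_nonneg_iff' (fun h z => add_le_add_right h z) fun x => by
    refine ⟨fun (hx : 0 ≤ (x : A)) => ?_, ?_⟩
    · have hsqrt : CFC.sqrt (x : A) ∈ D := by
        rw [CFC.sqrt_eq_real_sqrt _ hx]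
        exact cfcₙ_mem (𝕜' := ℂ) _ x.2
      refine ⟨⟨CFC.sqrt x, hsqrt⟩, Subtype.ext ?_⟩
      simp [(CFC.sqrt_nonneg (x : A)).isSelfAdjoint.star_eq, CFC.sqrt_mul_sqrt_self _ hx]
    · rintro ⟨s, rfl⟩
      exact star_mul_self_nonneg (s : A)

lemma exists_nonneg_norm_le_one_forall_norm_mul_sub_lt (S : Finset A) (hS : (S : Set A) ⊆ D)
    {ε : ℝ} (hε : 0 < ε) :
    ∃ e ∈ D, 0 ≤ e ∧ ‖e‖ ≤ 1 ∧ ∀ b ∈ S, ‖e * b - b‖ < ε ∧ ‖b * e - b‖ < ε := by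
  have hl := CStarAlgebra.increasingApproximateUnit D
  have hclose : ∀ b ∈ S, ∀ᶠ e : D in CStarAlgebra.approximateUnit D,
      ‖(e : A) * b - b‖ < ε ∧ ‖b * (e : A) - b‖ < ε := fun b hb =>
    ((Metric.tendsto_nhds.mp (hl.tendsto_mul_right ⟨b, hS hb⟩) ε hε).and
      (Metric.tendsto_nhds.mp (hl.tendsto_mul_left ⟨b, hS hb⟩) ε hε)).mono
      fun e he => by simpa [dist_eq_norm] using he
  obtain ⟨e, he0, he1, he⟩ := (hl.eventually_nonneg.and <| hl.eventually_norm.and <|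
    (Filter.eventually_all_finset S).mpr hclose).exists
  exact ⟨e, e.2, he0, he1, he⟩

end NonUnitalStarSubalgebra

section Average

variable {ι E : Type*} [SeminormedAddCommGroup E]

lemma norm_inv_card_smul_sum_le [NormedSpace ℝ E] {s : Finset ι} {f : ι → E} {r : ℝ} (hr : 0 ≤ r)
    (hf : ∀ i ∈ s, ‖f i‖ ≤ r) : ‖(#s : ℝ)⁻¹ • ∑ i ∈ s, f i‖ ≤ r := by
  rcases s.eq_empty_or_nonempty with rfl | hs
  · simpa using hr
  have hcard : (0 : ℝ) < #s := by exact_mod_cast hs.card_pos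
  rw [norm_smul, norm_inv, RCLike.norm_natCast, inv_mul_le_iff₀ hcard]
  simpa using norm_sum_le_of_le s hf

lemma inv_card_smul_sum_sub [Module ℝ E] {s : Finset ι} (hs : s.Nonempty) (f : ι → E) (x : E) :
    (#s : ℝ)⁻¹ • ∑ i ∈ s, f i - x = (#s : ℝ)⁻¹ • ∑ i ∈ s, (f i - x) := by
  have hcard : (#s : ℝ) ≠ 0 := by exact_mod_cast hs.card_pos.ne'
  rw [sum_sub_distrib, smul_sub, sum_const, ← Nat.cast_smul_eq_nsmul ℝ, smul_smul,
    inv_mul_cancel₀ hcard, one_smul]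

lemma norm_sum_sub_sum_le_card_symmDiff_mul [DecidableEq ι] (s t : Finset ι) {f : ι → E} {r : ℝ}
    (hf : ∀ i, ‖f i‖ ≤ r) : ‖∑ i ∈ s, f i - ∑ i ∈ t, f i‖ ≤ #(s ∆ t) * r := by
  have hcard : #(s ∆ t) = #(s \ t) + #(t \ s) := by
    rw [symmDiff_def, sup_eq_union, card_union_of_disjoint disjoint_sdiff_sdiff]
  rw [← sum_sdiff_sub_sum_sdiff, hcard, Nat.cast_add, add_mul]
  refine (norm_sub_le _ _).trans (add_le_add ?_ ?_) <;>
    simpa using norm_sum_le_of_le _ fun i _ => hf i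

end Average

section OrbitAverage

variable {A : Type*} [NonUnitalCStarAlgebra A] {G : Type*} (β : G → A ≃⋆ₐ[ℂ] A)

lemma apply_apply_inv_of_map_mul [Group G] (hβ : ∀ g h x, β (g * h) x = β g (β h x))
    (g : G) (x : A) : β g (β g⁻¹ x) = x := by
  have hβ_one (y : A) : β 1 y = y := (β 1).injective <| by simpa using (hβ 1 1 y).symm
  rw [← hβ, mul_inv_cancel, hβ_one]

noncomputable def orbitAverage (K : Finset G) (e : A) : A :=
  (#K : ℝ)⁻¹ • ∑ g ∈ K, β g e

lemma orbitAverage_mem {D : NonUnitalStarSubalgebra ℂ A} (hD : ∀ g, ∀ d ∈ D, β g d ∈ D)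
    (K : Finset G) {e : A} (he : e ∈ D) : orbitAverage β K e ∈ D := by
  rw [orbitAverage, ← Complex.coe_smul]
  exact D.smul_mem _ (sum_mem fun g _ => hD g e he)

lemma orbitAverage_nonneg [PartialOrder A] [StarOrderedRing A] (K : Finset G) {e : A}
    (he : 0 ≤ e) : 0 ≤ orbitAverage β K e :=
  smul_nonneg (by positivity) (sum_nonneg fun g _ => map_nonneg (β g) he)

lemma norm_orbitAverage_le (K : Finset G) (e : A) : ‖orbitAverage β K e‖ ≤ ‖e‖ :=
  norm_inv_card_smul_sum_le (norm_nonneg e) fun g _ => (StarAlgEquiv.norm_map (β g) e).le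

lemma norm_map_orbitAverage_sub_le [Group G] [DecidableEq G]
    (hβ : ∀ g h x, β (g * h) x = β g (β h x)) (s : G) (K : Finset G) (e : A) :
    ‖β s (orbitAverage β K e) - orbitAverage β K e‖ ≤ #(K.image (s * ·) ∆ K) / #K * ‖e‖ := by
  have hmap : β s (orbitAverage β K e) = (#K : ℝ)⁻¹ • ∑ g ∈ K.image (s * ·), β g e := by
    rw [orbitAverage, ← Complex.coe_smul, map_smul, map_sum, Complex.coe_smul,
      sum_image fun _ _ _ _ => mul_left_cancel]
    simp only [hβ]
  rw [hmap, orbitAverage, ← smul_sub, norm_smul, norm_inv, RCLike.norm_natCast,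
    div_mul_eq_mul_div, inv_mul_eq_div]
  gcongr
  exact norm_sum_sub_sum_le_card_symmDiff_mul _ _ fun g => (StarAlgEquiv.norm_map (β g) e).le

variable {β} {K : Finset G} {e : A} {ε : ℝ}

lemma norm_orbitAverage_mul_sub_le [Group G] (hβ : ∀ g h x, β (g * h) x = β g (β h x))
    (hK : K.Nonempty) (hε : 0 ≤ ε) {a : A} (h : ∀ g ∈ K, ‖e * β g⁻¹ a - β g⁻¹ a‖ ≤ ε) :
    ‖orbitAverage β K e * a - a‖ ≤ ε := by
  rw [orbitAverage, smul_mul_assoc, sum_mul, inv_card_smul_sum_sub hK]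
  refine norm_inv_card_smul_sum_le hε fun g hg => ?_
  rw [← apply_apply_inv_of_map_mul β hβ g a, ← map_mul, ← map_sub, StarAlgEquiv.norm_map]
  exact h g hg

lemma norm_mul_orbitAverage_sub_le [Group G] (hβ : ∀ g h x, β (g * h) x = β g (β h x))
    (hK : K.Nonempty) (hε : 0 ≤ ε) {a : A} (h : ∀ g ∈ K, ‖β g⁻¹ a * e - β g⁻¹ a‖ ≤ ε) :
    ‖a * orbitAverage β K e - a‖ ≤ ε := by
  rw [orbitAverage, mul_smul_comm, mul_sum, inv_card_smul_sum_sub hK]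
  refine norm_inv_card_smul_sum_le hε fun g hg => ?_
  rw [← apply_apply_inv_of_map_mul β hβ g a, ← map_mul, ← map_sub, StarAlgEquiv.norm_map]
  exact h g hg

end OrbitAverage

theorem exists_almost_invariant_approximate_unit_general
    (A : Type*) [NonUnitalCStarAlgebra A] [PartialOrder A] [StarOrderedRing A]
    (G : Type*) [Group G] [DecidableEq G] (hamen : FolnerCondition G)
    (β : G → A ≃⋆ₐ[ℂ] A) (hβ : ∀ g h x, β (g * h) x = β g (β h x))
    (D : NonUnitalStarSubalgebra ℂ A) (hDclosed : IsClosed (D : Set A))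
    (hDinv : ∀ g : G, ∀ d ∈ D, β g d ∈ D)
    (M : Finset G) (F : Finset A) (hF : ∀ a ∈ F, a ∈ D) (η : ℝ) (hη : 0 < η) :
    ∃ q ∈ D, 0 ≤ q ∧ ‖q‖ ≤ 1 ∧
      (∀ s ∈ M, ‖β s q - q‖ < η) ∧
      ∀ a ∈ F, ‖q * a - a‖ < η ∧ ‖a * q - a‖ < η ∧ ‖q * a - a * q‖ < η := by
  classical
  obtain ⟨K, hK, hKM⟩ := hamen M (η / 2) (half_pos hη)
  have hSD : (((K ×ˢ F).image fun p => β p.1⁻¹ p.2 : Finset A) : Set A) ⊆ D := by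
    simp only [coe_image, coe_product, Set.image_subset_iff]
    exact fun p hp => hDinv _ _ (hF p.2 hp.2)
  have : IsClosed (D : Set A) := hDclosed
  have hη3 : 0 < η / 3 := by positivity
  obtain ⟨e, heD, he0, he1, he⟩ := D.exists_nonneg_norm_le_one_forall_norm_mul_sub_lt _ hSD hη3
  have he' {a : A} (ha : a ∈ F) {g : G} (hg : g ∈ K) :
      ‖e * β g⁻¹ a - β g⁻¹ a‖ < η / 3 ∧ ‖β g⁻¹ a * e - β g⁻¹ a‖ < η / 3 :=
    he (β g⁻¹ a) (mem_image.2 ⟨(g, a), mem_product.2 ⟨hg, ha⟩, rfl⟩)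
  set q := orbitAverage β K e
  refine ⟨q, orbitAverage_mem β hDinv K heD, orbitAverage_nonneg β K he0,
    (norm_orbitAverage_le β K e).trans he1, fun s hs => ?_, fun a ha => ?_⟩
  · have hcard : (0 : ℝ) < #K := by exact_mod_cast hK.card_pos
    calc ‖β s q - q‖ ≤ #(K.image (s * ·) ∆ K) / #K * ‖e‖ :=
          norm_map_orbitAverage_sub_le β hβ s K e
      _ ≤ η / 2 * 1 :=
          mul_le_mul ((div_le_iff₀ hcard).2 (hKM s hs)) he1 (norm_nonneg e) (by positivity)
      _ < η := by linarith
  · have hqa := norm_orbitAverage_mul_sub_le hβ hK hη3.le fun g hg => (he' ha hg).1.le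
    have haq := norm_mul_orbitAverage_sub_le hβ hK hη3.le fun g hg => (he' ha hg).2.le
    refine ⟨by linarith, by linarith, ?_⟩
    calc ‖q * a - a * q‖ = ‖(q * a - a) - (a * q - a)‖ := by rw [sub_sub_sub_cancel_right]
      _ ≤ ‖q * a - a‖ + ‖a * q - a‖ := norm_sub_le _ _
      _ < η := by linarith

/-- Let `A` be a C*-algebra, `G` an amenable discrete group acting on `A` by
*-automorphisms `β`, and `D ⊆ A` a `β`-invariant hereditary C*-subalgebra. Then for every
finite `M ⊆ G`, finite `F ⊆ D` and `η > 0` there is a positive contraction `q ∈ D` with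
`‖β_s(q) − q‖ < η` for `s ∈ M` and `‖qa − a‖, ‖aq − a‖, ‖qa − aq‖ < η` for `a ∈ F`. -/
theorem exists_almost_invariant_approximate_unit
    (A : Type*) [NonUnitalCStarAlgebra A] [PartialOrder A] [StarOrderedRing A]
    (G : Type*) [Group G] [DecidableEq G] (hamen : FolnerCondition G)
    (β : G → A ≃⋆ₐ[ℂ] A) (hβ : ∀ g h x, β (g * h) x = β g (β h x))
    (D : NonUnitalStarSubalgebra ℂ A) (hDclosed : IsClosed (D : Set A))
    (hDher : ∀ a : A, 0 ≤ a → ∀ d ∈ D, a ≤ d → a ∈ D)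
    (hDinv : ∀ g : G, ∀ d ∈ D, β g d ∈ D)
    (M : Finset G) (F : Finset A) (hF : ∀ a ∈ F, a ∈ D) (η : ℝ) (hη : 0 < η) :
    ∃ q ∈ D, 0 ≤ q ∧ ‖q‖ ≤ 1 ∧
      (∀ s ∈ M, ‖β s q - q‖ < η) ∧
      ∀ a ∈ F, ‖q * a - a‖ < η ∧ ‖a * q - a‖ < η ∧ ‖q * a - a * q‖ < η :=
  exists_almost_invariant_approximate_unit_general A G hamen β hβ D hDclosed hDinv M F hF η hη
end

section
/- Let G be a group with subgroups K ≤ H ≤ G such that K is a virtual retract of H and H is a virtual retract of G. Then K is a virtual retract of G. -/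
/-- `H` is a virtual retract of `G`: there is a finite-index subgroup `L` of `G`
containing `H` and a homomorphism `ρ : L →* H` restricting to the identity on `H`. -/
def IsVirtualRetract {G : Type*} [Group G] (H : Subgroup G) : Prop :=
  ∃ (L : Subgroup G) (hHL : H ≤ L), L.index ≠ 0 ∧
    ∃ ρ : ↥L →* ↥H, ∀ h : ↥H, ρ ⟨(h : G), hHL h.2⟩ = h

/-- Transitivity of virtual retractions: if `K ≤ H ≤ G`, `K` is a virtual retract of `H`
and `H` is a virtual retract of `G`, then `K` is a virtual retract of `G`. -/
theorem isVirtualRetract_trans (G : Type*) [Group G] (K H : Subgroup G) (hKH : K ≤ H)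
    (h1 : IsVirtualRetract (K.subgroupOf H)) (h2 : IsVirtualRetract H) :
    IsVirtualRetract K := by
  obtain ⟨M, hKM, hMi, ρ1, hρ1⟩ := h1
  obtain ⟨L, hHL, hLi, ρ2, hρ2⟩ := h2
  -- ρ2 is surjective
  have hρ2surj : Function.Surjective ρ2 := fun h => ⟨⟨(h : G), hHL h.2⟩, hρ2 h⟩
  set N : Subgroup ↥L := M.comap ρ2 with hN
  have hNi : N.index = M.index := M.index_comap_of_surjective hρ2surj
  set L' : Subgroup G := N.map L.subtype with hL'
  have hinj : Function.Injective L.subtype := L.subtype_injective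
  have hL'i : L'.index ≠ 0 := by
    rw [hL', Subgroup.index_map_of_injective _ hinj, L.range_subtype]
    exact Nat.mul_ne_zero (hNi ▸ hMi) hLi
  have hKL' : K ≤ L' := by
    intro k hk
    refine ⟨⟨k, hHL (hKH hk)⟩, ?_, rfl⟩
    have : ρ2 ⟨k, hHL (hKH hk)⟩ = ⟨k, hKH hk⟩ := hρ2 ⟨k, hKH hk⟩
    simpa [hN, Subgroup.mem_comap, this] using hKM (show (⟨k, hKH hk⟩ : ↥H) ∈ K.subgroupOf H from hk)
  -- equivalence between N and L'
  set e := N.equivMapOfInjective L.subtype hinj with he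
  -- hom from K.subgroupOf H to K
  have φmul : ∀ x y : ↥(K.subgroupOf H), ((x * y : ↥(K.subgroupOf H)) : ↥H) = (x : ↥H) * (y : ↥H) :=
    fun x y => rfl
  let φ : ↥(K.subgroupOf H) →* ↥K :=
    { toFun := fun x => ⟨((x : ↥H) : G), x.2⟩
      map_one' := rfl
      map_mul' := fun x y => rfl }
  let ρ : ↥L' →* ↥K := φ.comp ((ρ1.comp (ρ2.subgroupComap M)).comp e.symm.toMonoidHom)
  refine ⟨L', hKL', hL'i, ρ, ?_⟩
  intro k
  have hkL : (k : G) ∈ L := hHL (hKH k.2)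
  have hkN : (⟨(k : G), hkL⟩ : ↥L) ∈ N := by
    have : ρ2 ⟨(k : G), hkL⟩ = ⟨(k : G), hKH k.2⟩ := hρ2 ⟨(k : G), hKH k.2⟩
    simpa [hN, Subgroup.mem_comap, this] using
      hKM (show (⟨(k : G), hKH k.2⟩ : ↥H) ∈ K.subgroupOf H from k.2)
  have hesymm : e.symm ⟨(k : G), hKL' k.2⟩ = ⟨⟨(k : G), hkL⟩, hkN⟩ := by
    rw [MulEquiv.symm_apply_eq]
    apply Subtype.ext
    rw [Subgroup.coe_equivMapOfInjective_apply]
    rfl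
  show φ (ρ1 ((ρ2.subgroupComap M) (e.symm ⟨(k : G), hKL' k.2⟩))) = k
  rw [hesymm]
  have hcomap : (ρ2.subgroupComap M) ⟨⟨(k : G), hkL⟩, hkN⟩ =
      ⟨⟨(k : G), hKH k.2⟩, hKM (show (⟨(k : G), hKH k.2⟩ : ↥H) ∈ K.subgroupOf H from k.2)⟩ := by
    apply Subtype.ext
    show ρ2 ⟨(k : G), hkL⟩ = _
    exact hρ2 ⟨(k : G), hKH k.2⟩
  rw [hcomap]
  have := hρ1 ⟨⟨(k : G), hKH k.2⟩, k.2⟩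
  rw [this]
  rfl
end
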